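/- In G_inv, for any x > 1/2: the entailment relations induced by the filters (x,1] and [x,1] on [0,1] coincide. That is, for all Γ and χ: (for every valuation v, inf{v(φ):φ∈Γ} ∈ (x,1] implies v(χ) ∈ (x,1]) if and only if (for every valuation v, inf{v(φ):φ∈Γ} ∈ [x,1] implies v(χ) ∈ [x,1]). -/

import Mathlib

noncomputable def gimp (a b : ℝ) : ℝ := if a ≤ b then 1 else b
noncomputable def gcoimp (a b : ℝ) : ℝ := if a ≤ b then 0 else a
noncomputable def gneg (a : ℝ) : ℝ := if a = 0 then 1 else 0
noncomputable def gdelta (a : ℝ) : ℝ := if a = 1 then 1 else 0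

/-- Formulas of Gödel logic with involutive negation. -/
inductive IForm : Type
  | var : ℕ → IForm
  | bot : IForm
  | top : IForm
  | and : IForm → IForm → IForm
  | or : IForm → IForm → IForm
  | imp : IForm → IForm → IForm
  | coimp : IForm → IForm → IForm
  | wneg : IForm → IForm
  | delta : IForm → IForm
  | inv : IForm → IForm

/-- Evaluation of `G_inv` formulas in `[0,1]`. -/
noncomputable def ieval (v : ℕ → ℝ) : IForm → ℝ
  | .var n => v n
  | .bot => 0
  | .top => 1
  | .and φ χ => min (ieval v φ) (ieval v χ)
  | .or φ χ => max (ieval v φ) (ieval v χ)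
  | .imp φ χ => gimp (ieval v φ) (ieval v χ)
  | .coimp φ χ => gcoimp (ieval v φ) (ieval v χ)
  | .wneg φ => gneg (ieval v φ)
  | .delta φ => gdelta (ieval v φ)
  | .inv φ => 1 - ieval v φ

def valOK (v : ℕ → ℝ) : Prop := ∀ n, v n ∈ Set.Icc (0:ℝ) 1

/-- A (lattice) filter on `[0,1]`. -/
structure GFilter (D : Set ℝ) : Prop where
  subset : D ⊆ Set.Icc (0:ℝ) 1
  nonempty : D.Nonempty
  proper : D ≠ Set.Icc (0:ℝ) 1
  min_mem : ∀ a ∈ D, ∀ b ∈ D, min a b ∈ D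
  upward : ∀ a ∈ D, ∀ b ∈ Set.Icc (0:ℝ) 1, a ≤ b → b ∈ D

/-- Infimum of premise values (`1` for the empty set). -/
noncomputable def infVal (v : ℕ → ℝ) (Γ : Set IForm) : ℝ :=
  sInf (insert 1 (ieval v '' Γ))

/-- Entailment induced by a set `D` of designated values. -/
def entD (D : Set ℝ) (Γ : Set IForm) (χ : IForm) : Prop :=
  ∀ v : ℕ → ℝ, valOK v → infVal v Γ ∈ D → ieval v χ ∈ D

/-- Order-entailment. -/
def entLe (Γ : Set IForm) (χ : IForm) : Prop :=
  ∀ v : ℕ → ℝ, valOK v → infVal v Γ ≤ ieval v χ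

section AuxEnt

/-- A symmetric order automorphism of `[0,1]` (viewed as a map of `ℝ`). -/
structure GoodMap (h : ℝ → ℝ) : Prop where
  mono : StrictMono h
  cont : Continuous h
  zero : h 0 = 0
  one : h 1 = 1
  symm : ∀ u, h (1 - u) = 1 - h u

/-- A piecewise linear symmetric map sending `s` to `t`. -/
noncomputable def pl (s t u : ℝ) : ℝ :=
  if u ≤ 1 - s then u * ((1 - t) / (1 - s))
  else if u ≤ s then 1 / 2 + (u - 1 / 2) * ((t - 1 / 2) / (s - 1 / 2))
  else t + (u - s) * ((1 - t) / (1 - s))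

lemma pl_def1 {s t u : ℝ} (h : u ≤ 1 - s) :
    pl s t u = u * ((1 - t) / (1 - s)) := if_pos h

lemma pl_def2 {s t u : ℝ} (h1 : 1 - s < u) (h2 : u ≤ s) :
    pl s t u = 1 / 2 + (u - 1 / 2) * ((t - 1 / 2) / (s - 1 / 2)) := by
  unfold pl; rw [if_neg (by linarith), if_pos h2]

lemma pl_def3 {s t u : ℝ} (hs : 1 / 2 < s) (h : s < u) :
    pl s t u = t + (u - s) * ((1 - t) / (1 - s)) := by
  unfold pl; rw [if_neg (by linarith), if_neg (by linarith)]

lemma pl_good {s t : ℝ} (hs1 : 1 / 2 < s) (hs2 : s < 1) (ht1 : 1 / 2 < t) (ht2 : t < 1) :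
    GoodMap (pl s t) := by
  have hk1 : (0:ℝ) < (1 - t) / (1 - s) := div_pos (by linarith) (by linarith)
  have hk2 : (0:ℝ) < (t - 1 / 2) / (s - 1 / 2) := div_pos (by linarith) (by linarith)
  have e1 : (1 - s) * ((1 - t) / (1 - s)) = 1 - t := by
    rw [mul_comm, div_mul_cancel₀]
    linarith
  have e2 : (s - 1 / 2) * ((t - 1 / 2) / (s - 1 / 2)) = t - 1 / 2 := by
    rw [mul_comm, div_mul_cancel₀]
    linarith
  constructor
  · -- StrictMono
    intro u1 u2 h12
    rcases le_or_gt u1 (1 - s) with c1 | c1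
    · rw [pl_def1 c1]
      rcases le_or_gt u2 (1 - s) with d1 | d1
      · rw [pl_def1 d1]
        exact mul_lt_mul_of_pos_right h12 hk1
      · rcases le_or_gt u2 s with d2 | d2
        · rw [pl_def2 d1 d2]
          nlinarith [mul_le_mul_of_nonneg_right c1 hk1.le,
            mul_lt_mul_of_pos_right d1 hk2]
        · rw [pl_def3 hs1 d2]
          nlinarith [mul_le_mul_of_nonneg_right c1 hk1.le,
            mul_pos (show (0:ℝ) < u2 - s by linarith) hk1]
    · rcases le_or_gt u1 s with c2 | c2
      · rw [pl_def2 c1 c2]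
        rcases le_or_gt u2 s with d2 | d2
        · rw [pl_def2 (by linarith) d2]
          nlinarith [mul_lt_mul_of_pos_right h12 hk2]
        · rw [pl_def3 hs1 d2]
          nlinarith [mul_le_mul_of_nonneg_right (show u1 - 1/2 ≤ s - 1/2 by linarith) hk2.le,
            mul_pos (show (0:ℝ) < u2 - s by linarith) hk1]
      · rw [pl_def3 hs1 c2, pl_def3 hs1 (by linarith)]
        nlinarith [mul_lt_mul_of_pos_right h12 hk1]
  · -- Continuous
    unfold pl
    apply Continuous.if_le
    · exact continuous_id.mul continuous_const
    · apply Continuous.if_le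
      · exact continuous_const.add ((continuous_id.sub continuous_const).mul continuous_const)
      · exact continuous_const.add ((continuous_id.sub continuous_const).mul continuous_const)
      · exact continuous_id
      · exact continuous_const
      · intro a ha
        rw [ha]
        linear_combination e2
    · exact continuous_id
    · exact continuous_const
    · intro a ha
      rw [ha, if_pos (by linarith : (1:ℝ) - s ≤ s)]
      linear_combination e1 + e2
  · -- zero
    rw [pl_def1 (by linarith : (0:ℝ) ≤ 1 - s), zero_mul]
  · -- one
    rw [pl_def3 hs1 hs2]
    linear_combination e1
  · -- symm
    intro u
    rcases le_or_gt u (1 - s) with h1 | h1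
    · rcases lt_or_eq_of_le h1 with h1' | h1'
      · rw [pl_def1 h1, pl_def3 hs1 (by linarith)]
        linear_combination e1
      · rw [pl_def1 h1, pl_def2 (by linarith) (by linarith)]
        subst h1'
        linear_combination e1 + e2
    · rcases le_or_gt u s with h2 | h2
      · rcases lt_or_eq_of_le h2 with h2' | h2'
        · rw [pl_def2 h1 h2, pl_def2 (by linarith) (by linarith)]
          ring
        · rw [pl_def2 h1 h2, pl_def1 (by linarith)]
          subst h2'
          linear_combination e1 + e2
      · rw [pl_def3 hs1 h2, pl_def1 (by linarith)]
        linear_combination e1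

lemma goodMap_maps {h : ℝ → ℝ} (H : GoodMap h) {u : ℝ} (hu : u ∈ Set.Icc (0:ℝ) 1) :
    h u ∈ Set.Icc (0:ℝ) 1 :=
  ⟨by rw [← H.zero]; exact H.mono.monotone hu.1,
   by rw [← H.one]; exact H.mono.monotone hu.2⟩

lemma ieval_mem (v : ℕ → ℝ) (hv : valOK v) : ∀ φ, ieval v φ ∈ Set.Icc (0:ℝ) 1 := by
  intro φ
  induction φ with
  | var n => exact hv n
  | bot => exact ⟨le_refl 0, zero_le_one⟩
  | top => exact ⟨zero_le_one, le_refl 1⟩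
  | and φ χ ih1 ih2 =>
      exact ⟨le_min ih1.1 ih2.1, min_le_of_left_le ih1.2⟩
  | or φ χ ih1 ih2 =>
      exact ⟨le_max_of_le_left ih1.1, max_le ih1.2 ih2.2⟩
  | imp φ χ ih1 ih2 =>
      simp only [ieval, gimp]; split_ifs
      · exact ⟨zero_le_one, le_refl 1⟩
      · exact ih2
  | coimp φ χ ih1 ih2 =>
      simp only [ieval, gcoimp]; split_ifs
      · exact ⟨le_refl 0, zero_le_one⟩
      · exact ih1
  | wneg φ ih =>
      simp only [ieval, gneg]; split_ifs
      · exact ⟨zero_le_one, le_refl 1⟩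
      · exact ⟨le_refl 0, zero_le_one⟩
  | delta φ ih =>
      simp only [ieval, gdelta]; split_ifs
      · exact ⟨zero_le_one, le_refl 1⟩
      · exact ⟨le_refl 0, zero_le_one⟩
  | inv φ ih =>
      exact ⟨by simp only [ieval]; linarith [ih.2], by simp only [ieval]; linarith [ih.1]⟩

lemma ieval_comp {h : ℝ → ℝ} (H : GoodMap h) (v : ℕ → ℝ) :
    ∀ φ, ieval (fun n => h (v n)) φ = h (ieval v φ) := by
  intro φ
  induction φ with
  | var n => rfl
  | bot => simp only [ieval, H.zero]
  | top => simp only [ieval, H.one]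
  | and φ χ ih1 ih2 =>
      simp only [ieval, ih1, ih2]
      exact (H.mono.monotone.map_min).symm
  | or φ χ ih1 ih2 =>
      simp only [ieval, ih1, ih2]
      exact (H.mono.monotone.map_max).symm
  | imp φ χ ih1 ih2 =>
      simp only [ieval, ih1, ih2]
      unfold gimp
      by_cases hab : ieval v φ ≤ ieval v χ
      · rw [if_pos hab, if_pos (H.mono.monotone hab), H.one]
      · rw [if_neg hab, if_neg (fun hc => hab (H.mono.le_iff_le.mp hc))]
  | coimp φ χ ih1 ih2 =>
      simp only [ieval, ih1, ih2]
      unfold gcoimp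
      by_cases hab : ieval v φ ≤ ieval v χ
      · rw [if_pos hab, if_pos (H.mono.monotone hab), H.zero]
      · rw [if_neg hab, if_neg (fun hc => hab (H.mono.le_iff_le.mp hc))]
  | wneg φ ih =>
      simp only [ieval, ih]
      unfold gneg
      by_cases ha : ieval v φ = 0
      · rw [if_pos ha, if_pos (by rw [ha, H.zero]), H.one]
      · rw [if_neg ha, if_neg (fun hc => ha (H.mono.injective (by rw [hc, H.zero]))), H.zero]
  | delta φ ih =>
      simp only [ieval, ih]
      unfold gdelta
      by_cases ha : ieval v φ = 1
      · rw [if_pos ha, if_pos (by rw [ha, H.one]), H.one]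
      · rw [if_neg ha, if_neg (fun hc => ha (H.mono.injective (by rw [hc, H.one]))), H.zero]
  | inv φ ih =>
      simp only [ieval, ih]
      exact (H.symm _).symm

lemma infVal_bddBelow (v : ℕ → ℝ) (hv : valOK v) (Γ : Set IForm) :
    BddBelow (insert (1:ℝ) (ieval v '' Γ)) := by
  refine ⟨0, ?_⟩
  rintro y (rfl | ⟨φ, _, rfl⟩)
  · exact zero_le_one
  · exact (ieval_mem v hv φ).1

lemma infVal_mem (v : ℕ → ℝ) (hv : valOK v) (Γ : Set IForm) :
    infVal v Γ ∈ Set.Icc (0:ℝ) 1 := by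
  constructor
  · apply le_csInf ⟨1, Set.mem_insert _ _⟩
    rintro y (rfl | ⟨φ, _, rfl⟩)
    · exact zero_le_one
    · exact (ieval_mem v hv φ).1
  · exact csInf_le (infVal_bddBelow v hv Γ) (Set.mem_insert _ _)

lemma infVal_comp {h : ℝ → ℝ} (H : GoodMap h) (v : ℕ → ℝ) (hv : valOK v) (Γ : Set IForm) :
    infVal (fun n => h (v n)) Γ = h (infVal v Γ) := by
  unfold infVal
  have himg : insert (1:ℝ) (ieval (fun n => h (v n)) '' Γ)
      = h '' insert 1 (ieval v '' Γ) := by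
    rw [Set.image_insert_eq, H.one, Set.image_image]
    congr 1
    exact Set.image_congr' (ieval_comp H v)
  rw [himg]
  exact (Monotone.map_csInf_of_continuousAt (H.cont.continuousAt) H.mono.monotone
    ⟨1, Set.mem_insert _ _⟩ (infVal_bddBelow v hv Γ)).symm

lemma exists_up (x c : ℝ) (hx1 : 1 / 2 < x) (hx2 : x < 1) (hc0 : 0 ≤ c) (hcx : c < x) :
    ∃ h : ℝ → ℝ, GoodMap h ∧ h c ≤ x ∧ x < h x := by
  set d := max c (1 / 2) with hd
  have hd1 : 1 / 2 ≤ d := le_max_right _ _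
  have hdx : d < x := max_lt hcx hx1
  set s := (d + x) / 2 with hsdef
  have hs1 : 1 / 2 < s := by simp only [hsdef]; linarith
  have hds : d < s := by simp only [hsdef]; linarith
  have hsx : s < x := by simp only [hsdef]; linarith
  set s' := (d + s) / 2 with hs'def
  have hds' : d < s' := by simp only [hs'def]; linarith
  have hs's : s' < s := by simp only [hs'def]; linarith
  have hs'half : 1 / 2 < s' := by simp only [hs'def]; linarith
  set t := min (1 / 2 + (x - 1 / 2) * (s - 1 / 2) / (s' - 1 / 2)) ((1 + x) / 2) with htdef
  have ht_gt_x : x < t := by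
    apply lt_min
    · have : x - 1 / 2 < (x - 1 / 2) * (s - 1 / 2) / (s' - 1 / 2) := by
        rw [lt_div_iff₀ (by linarith : (0:ℝ) < s' - 1 / 2)]
        nlinarith
      linarith
    · linarith
  have ht1 : t < 1 := lt_of_le_of_lt (min_le_right _ _) (by linarith)
  have ht_half : 1 / 2 < t := by linarith
  have H := pl_good hs1 (by linarith : s < 1) ht_half ht1
  refine ⟨pl s t, H, ?_, ?_⟩
  · have hcd : c ≤ d := le_max_left _ _
    refine le_trans (H.mono.monotone hcd) ?_
    rw [pl_def2 (by linarith) hds.le]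
    have hA : t - 1 / 2 ≤ (x - 1 / 2) * (s - 1 / 2) / (s' - 1 / 2) := by
      have := min_le_left (1 / 2 + (x - 1 / 2) * (s - 1 / 2) / (s' - 1 / 2)) ((1 + x) / 2)
      rw [← htdef] at this
      linarith
    have hA' : (t - 1 / 2) * (s' - 1 / 2) ≤ (x - 1 / 2) * (s - 1 / 2) :=
      (le_div_iff₀ (by linarith : (0:ℝ) < s' - 1 / 2)).mp hA
    have key : (d - 1 / 2) * ((t - 1 / 2) / (s - 1 / 2)) ≤ x - 1 / 2 := by
      rw [mul_div_assoc'] at *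
      rw [div_le_iff₀ (by linarith : (0:ℝ) < s - 1 / 2)]
      nlinarith
    linarith
  · rw [pl_def3 hs1 hsx]
    have hk1 : (0:ℝ) < (1 - t) / (1 - s) := div_pos (by linarith) (by linarith)
    nlinarith [mul_pos (show (0:ℝ) < x - s by linarith) hk1]

lemma exists_down (x m : ℝ) (hx1 : 1 / 2 < x) (hxm : x < m) (hm1 : m < 1) :
    ∃ h : ℝ → ℝ, GoodMap h ∧ h x < x ∧ x ≤ h m := by
  set s := (x + m) / 2 with hsdef
  have hxs : x < s := by simp only [hsdef]; linarith
  have hsm : s < m := by simp only [hsdef]; linarith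
  have hs1 : 1 / 2 < s := by linarith
  have hs2 : s < 1 := by linarith
  set r := (m - s) / (1 - s) with hrdef
  have hr0 : 0 < r := div_pos (by linarith) (by linarith)
  have hr1 : r < 1 := (div_lt_one (by linarith)).mpr (by linarith)
  set t := max ((x - r) / (1 - r)) ((1 / 2 + x) / 2) with htdef
  have htx : t < x := by
    apply max_lt
    · rw [div_lt_iff₀ (by linarith : (0:ℝ) < 1 - r)]
      nlinarith
    · linarith
  have ht2 : 1 / 2 < t := lt_of_lt_of_le (by linarith) (le_max_right _ _)
  have ht1 : t < 1 := by linarith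
  have H := pl_good hs1 hs2 ht2 ht1
  refine ⟨pl s t, H, ?_, ?_⟩
  · rw [pl_def2 (by linarith) hxs.le]
    have key : (x - 1 / 2) * ((t - 1 / 2) / (s - 1 / 2)) < x - 1 / 2 := by
      rw [mul_div_assoc']
      rw [div_lt_iff₀ (by linarith : (0:ℝ) < s - 1 / 2)]
      nlinarith
    linarith
  · rw [pl_def3 hs1 hsm]
    have h1 : (x - r) / (1 - r) ≤ t := le_max_left _ _
    have h2 : x - r ≤ t * (1 - r) := (div_le_iff₀ (by linarith : (0:ℝ) < 1 - r)).mp h1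
    have h3 : (m - s) * ((1 - t) / (1 - s)) = (1 - t) * r := by
      rw [hrdef]
      field_simp
    rw [h3]
    nlinarith

end AuxEnt

/-- For `1/2 < x < 1`, the entailment relations in `G_inv` induced by the
filters `(x,1]` and `[x,1]` coincide. -/
theorem Ioc_Icc_entailments_coincide :
    ∀ x : ℝ, 1/2 < x → x < 1 →
      ∀ (Γ : Set IForm) (χ : IForm),
        entD (Set.Ioc x 1) Γ χ ↔ entD (Set.Icc x 1) Γ χ := by

  intro x hx1 hx2 Γ χ
  constructor
  · intro hIoc v hv hm
    by_contra hcon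
    have hc := ieval_mem v hv χ
    have hcx : ieval v χ < x := by
      rcases lt_or_ge (ieval v χ) x with h' | h'
      · exact h'
      · exact absurd ⟨h', hc.2⟩ hcon
    obtain ⟨h, H, hhc, hhx⟩ := exists_up x (ieval v χ) hx1 hx2 hc.1 hcx
    have hv' : valOK (fun n => h (v n)) := fun n => goodMap_maps H (hv n)
    have hmem : infVal (fun n => h (v n)) Γ ∈ Set.Ioc x 1 := by
      rw [infVal_comp H v hv Γ]
      constructor
      · exact lt_of_lt_of_le hhx (H.mono.monotone hm.1)
      · rw [← H.one]
        exact H.mono.monotone hm.2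
    have key := hIoc (fun n => h (v n)) hv' hmem
    rw [ieval_comp H] at key
    exact absurd key.1 (not_lt.mpr hhc)
  · intro hIcc v hv hm
    by_contra hcon
    have hc := ieval_mem v hv χ
    have hcx : ieval v χ ≤ x := by
      by_contra h'
      exact hcon ⟨lt_of_not_ge h', hc.2⟩
    have hiv := infVal_mem v hv Γ
    set m := min (infVal v Γ) ((x + 1) / 2) with hmdef
    have hxm : x < m := lt_min hm.1 (by linarith)
    have hm1 : m < 1 := lt_of_le_of_lt (min_le_right _ _) (by linarith)
    obtain ⟨h, H, hhx, hhm⟩ := exists_down x m hx1 hxm hm1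
    have hv' : valOK (fun n => h (v n)) := fun n => goodMap_maps H (hv n)
    have hmem : infVal (fun n => h (v n)) Γ ∈ Set.Icc x 1 := by
      rw [infVal_comp H v hv Γ]
      constructor
      · exact le_trans hhm (H.mono.monotone (min_le_left _ _))
      · rw [← H.one]
        exact H.mono.monotone hiv.2
    have key := hIcc (fun n => h (v n)) hv' hmem
    rw [ieval_comp H] at key
    exact absurd key.1 (not_le.mpr (lt_of_le_of_lt (H.mono.monotone hcx) hhx))
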